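/- arXiv:1901.02194 — 5 statements merged into one kernel-verified Lean document; each statement's English description precedes it below -/
import Mathlib

section
/- Let u, v be words with |u| = |v| such that uv is primitive. Then for all ℓ, n ∈ ℕ with n > |uv| + ℓ + 2, we have (uv)^ℓ v (uv)^{n−ℓ−1} ↪ (uv)ⁿ. -/
/-!
Let `w = uv`, `m = |v|`, and let `f` be an embedding of `x = w^ℓ v w^(n-ℓ-1)` into `w^n`, so
`|w^n| = |x| + m`. The shift `f j - j` is nondecreasing, and if `f` is not terminal it stays
below `m`. Hence among the `m + 1` starting points of consecutive periods of the suffix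
`w^(n-ℓ-1)` (which has more than `m` periods) two neighbours have the same shift `c`, so `f`
translates a whole period by `c`. Reading the letters of that period in `x` and in `w^n` shows
that `w` equals its rotation by `m + c`, where `0 < m + c < |w|`. But a primitive word is
different from all its nontrivial rotations: `w = ab = ba` forces `a` and `b` to be powers of a
common word.
-/

/-- `wpow w n` is the word `w` concatenated `n` times (the `n`-th power of `w`). -/
def wpow {α : Type*} (w : List α) (n : ℕ) : List α :=
  (List.replicate n w).flatten

/-- A word `w ∈ Σ⁺` is primitive if it is nonempty and not a proper power `r^k`, `k ≥ 2`. -/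
def Primitive {α : Type*} (w : List α) : Prop :=
  w ≠ [] ∧ ∀ (r : List α) (k : ℕ), 2 ≤ k → w ≠ wpow r k

/-- An embedding of `x` into `y`: a strictly increasing, letter-preserving map of positions. -/
def IsEmbedding {α : Type*} (x y : List α) (f : Fin x.length → Fin y.length) : Prop :=
  StrictMono f ∧ ∀ i, x.get i = y.get (f i)

/-- `x ↪ y`: `x` is a subword of `y` and every embedding of `x` into `y` is terminal,
i.e. maps the last position of `x` to the last position of `y`. -/
def PMaxSub {α : Type*} (x y : List α) : Prop :=
  x.Sublist y ∧ ∀ f : Fin x.length → Fin y.length, IsEmbedding x y f →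
    ∀ i : Fin x.length, (i : ℕ) = x.length - 1 → (f i : ℕ) = y.length - 1

theorem exists_lt_eq_succ_of_lt {s : ℕ → ℕ} {m : ℕ} (hs : ∀ t < m, s t ≤ s (t + 1))
    (hm : s m < m) : ∃ t < m, s t = s (t + 1) := by
  by_contra! hne
  have hgrow : ∀ t ≤ m, t ≤ s t := by
    intro t
    induction t with
    | zero => simp
    | succ t ih =>
      intro ht
      have := hs t (by omega)
      have := hne t (by omega)
      have := ih (by omega)
      omega
  exact absurd (hgrow m le_rfl) (not_le.mpr hm)

theorem Fin.exists_strictMonoOn_extend {k N : ℕ} {f : Fin k → Fin N} (hf : StrictMono f) :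
    ∃ g : ℕ → ℕ, StrictMonoOn g (Set.Iio k) ∧ ∀ j : Fin k, g j = f j := by
  refine ⟨fun j => if h : j < k then f ⟨j, h⟩ else 0, fun i hi j hj hij => ?_, fun j => ?_⟩
  · simpa [Set.mem_Iio.mp hi, Set.mem_Iio.mp hj] using hf (Fin.mk_lt_mk.mpr hij)
  · simp

namespace StrictMonoOn

variable {g : ℕ → ℕ} {k : ℕ}

theorem add_sub_le (hg : StrictMonoOn g (Set.Iio k)) {i j : ℕ} (hij : i ≤ j) (hj : j < k) :
    g i + (j - i) ≤ g j := by
  obtain ⟨d, rfl⟩ := Nat.exists_eq_add_of_le hij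
  induction d with
  | zero => simp
  | succ d ih =>
    have hstep : g (i + d) < g (i + (d + 1)) :=
      hg (Set.mem_Iio.mpr (by omega)) (Set.mem_Iio.mpr hj) (by omega)
    have := ih (by omega) (by omega)
    omega

theorem exists_block_shift (hg : StrictMonoOn g (Set.Iio k)) {m L a : ℕ}
    (hlast : g (k - 1) < k - 1 + m) (hk : a + m * L < k) :
    ∃ t < m, ∃ c < m, ∀ p ≤ L, g (a + t * L + p) = a + t * L + p + c := by
  have hid : ∀ j < k, j ≤ g j := fun j hj => by
    have := hg.add_sub_le (Nat.zero_le j) hj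
    omega
  have hshift : ∀ i j, i ≤ j → j < k → g i - i ≤ g j - j := fun i j hij hj => by
    have := hg.add_sub_le hij hj
    omega
  have hbound : ∀ j < k, g j - j < m := fun j hj => by
    have := hshift j (k - 1) (by omega) (by omega)
    have := hid (k - 1) (by omega)
    omega
  have hmL : ∀ t ≤ m, t * L ≤ m * L := fun t ht => Nat.mul_le_mul_right L ht
  obtain ⟨t, ht, heq⟩ := exists_lt_eq_succ_of_lt (s := fun t => g (a + t * L) - (a + t * L))
    (fun t ht => hshift _ _ (Nat.add_le_add_left (Nat.mul_le_mul_right L t.le_succ) a)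
      (by have := hmL (t + 1) ht; omega))
    (hbound _ (by omega))
  refine ⟨t, ht, g (a + t * L) - (a + t * L), hbound _ (by have := hmL t ht.le; omega),
    fun p hp => ?_⟩
  have hsucc : (t + 1) * L = t * L + L := Nat.succ_mul t L
  have hend := hmL (t + 1) ht
  have hlow := hshift (a + t * L) (a + t * L + p) (by omega) (by omega)
  have hhigh := hshift (a + t * L + p) (a + (t + 1) * L) (by omega) (by omega)
  have := hid (a + t * L + p) (by omega)
  omega

end StrictMonoOn

section Words

variable {α : Type*}

theorem wpow_succ (w : List α) (k : ℕ) : wpow w (k + 1) = w ++ wpow w k := by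
  simp [wpow, List.replicate_succ]

theorem wpow_one (w : List α) : wpow w 1 = w := by
  simp [wpow]

theorem wpow_add (w : List α) (i j : ℕ) : wpow w (i + j) = wpow w i ++ wpow w j := by
  rw [wpow, wpow, wpow, ← List.flatten_append, List.replicate_append_replicate]

@[simp]
theorem length_wpow (w : List α) (k : ℕ) : (wpow w k).length = k * w.length := by
  induction k with
  | zero => simp [wpow]
  | succ k ih => rw [wpow_succ, List.length_append, ih]; ring

theorem getElem?_wpow {w : List α} {k q : ℕ} (hq : q < k * w.length) :
    (wpow w k)[q]? = w[q % w.length]? := by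
  induction k generalizing q with
  | zero => simp at hq
  | succ k ih =>
    rw [wpow_succ]
    by_cases hqw : q < w.length
    · rw [List.getElem?_append_left hqw, Nat.mod_eq_of_lt hqw]
    · push Not at hqw
      rw [List.getElem?_append_right hqw, ih (by rw [Nat.succ_mul] at hq; omega),
        ← Nat.mod_eq_sub_mod hqw]

theorem getElem?_append_wpow (x w : List α) {K q : ℕ} (hq : q < K * w.length) :
    (x ++ wpow w K)[x.length + q]? = w[q % w.length]? := by
  rw [List.getElem?_append_right (by omega), Nat.add_sub_cancel_left, getElem?_wpow hq]

theorem exists_wpow_of_append_comm {a b : List α} (h : a ++ b = b ++ a) :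
    ∃ z i j, a = wpow z i ∧ b = wpow z j := by
  induction hn : a.length + b.length using Nat.strong_induction_on generalizing a b with
  | _ n ih =>
  wlog hab : a.length ≤ b.length generalizing a b
  · obtain ⟨z, i, j, rfl, rfl⟩ := this h.symm (by omega) (by omega)
    exact ⟨z, j, i, rfl, rfl⟩
  rcases eq_or_ne a [] with rfl | ha
  · exact ⟨b, 0, 1, rfl, (wpow_one b).symm⟩
  obtain ⟨c, rfl⟩ : a <+: b :=
    List.prefix_of_prefix_length_le (h ▸ List.prefix_append a b) (List.prefix_append b a) hab
  have hc : a ++ c = c ++ a := by simpa using h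
  have hlt : a.length + c.length < n := by
    have := List.length_pos_iff.mpr ha
    simp only [List.length_append] at hn
    omega
  obtain ⟨z, i, j, rfl, rfl⟩ := ih _ hlt hc rfl
  exact ⟨z, i, i + j, rfl, (wpow_add z i j).symm⟩

theorem Primitive.rotate_ne {w : List α} (hw : Primitive w) {r : ℕ} (hr0 : 0 < r)
    (hr : r < w.length) : w.rotate r ≠ w := by
  intro hrot
  have hcomm : w.take r ++ w.drop r = w.drop r ++ w.take r := by
    rw [List.take_append_drop, ← List.rotate_eq_drop_append_take hr.le, hrot]
  obtain ⟨z, i, j, hi, hj⟩ := exists_wpow_of_append_comm hcomm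
  have hi0 : i ≠ 0 := by
    rintro rfl
    have := congrArg List.length hi
    simp only [List.length_take, length_wpow, zero_mul] at this
    omega
  have hj0 : j ≠ 0 := by
    rintro rfl
    have := congrArg List.length hj
    simp only [List.length_drop, length_wpow, zero_mul] at this
    omega
  exact hw.2 z (i + j) (by omega) (by rw [wpow_add, ← hi, ← hj, List.take_append_drop])

theorem IsEmbedding.getElem?_eq {x y : List α} {f : Fin x.length → Fin y.length}
    (hf : IsEmbedding x y f) {j : ℕ} (hj : j < x.length) : x[j]? = y[(f ⟨j, hj⟩ : ℕ)]? := by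
  have hget := hf.2 ⟨j, hj⟩
  simp only [List.get_eq_getElem] at hget
  rw [List.getElem?_eq_getElem hj, List.getElem?_eq_getElem (f ⟨j, hj⟩).isLt, hget]

theorem IsEmbedding.exists_rotate_eq {x w : List α} {K n m : ℕ}
    {f : Fin (x ++ wpow w K).length → Fin (wpow w n).length}
    (hf : IsEmbedding (x ++ wpow w K) (wpow w n) f)
    (hlen : (wpow w n).length = (x ++ wpow w K).length + m) (hmK : m < K)
    (i : Fin (x ++ wpow w K).length) (hi : (i : ℕ) = (x ++ wpow w K).length - 1)
    (hfi : (f i : ℕ) ≠ (wpow w n).length - 1) :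
    ∃ c < m, w.rotate (x.length + c) = w := by
  set L := w.length
  have hL : 0 < L := Nat.pos_of_mul_pos_left (length_wpow w n ▸ (f i).pos)
  have hk : (x ++ wpow w K).length = x.length + K * L := by simp [L]
  obtain ⟨g, hg, hgf⟩ := Fin.exists_strictMonoOn_extend hf.1
  have hgi : g ((x ++ wpow w K).length - 1) < (x ++ wpow w K).length - 1 + m := by
    rw [← hi, hgf i]
    have := (f i).isLt
    omega
  have hblock : x.length + m * L < (x ++ wpow w K).length := by
    have := Nat.mul_lt_mul_of_pos_right hmK hL
    omega
  obtain ⟨t, ht, c, hc, hshift⟩ := hg.exists_block_shift hgi hblock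
  refine ⟨c, hc, List.ext_getElem? fun p => ?_⟩
  rcases lt_or_ge p L with hp | hp
  · have htL : t * L + p < K * L := by
      have := Nat.mul_le_mul_right L (show t + 1 ≤ K by omega)
      rw [Nat.succ_mul] at this
      omega
    have hj : x.length + t * L + p < (x ++ wpow w K).length := by omega
    have hletter := hf.getElem?_eq hj
    have hy := (f ⟨_, hj⟩).isLt
    rw [← hgf, hshift p hp.le] at hletter hy
    rw [length_wpow, Nat.add_assoc x.length] at hy
    rw [Nat.add_assoc x.length, getElem?_append_wpow x w htL, Nat.mul_add_mod_self_right,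
      Nat.mod_eq_of_lt hp, getElem?_wpow hy] at hletter
    have hmod : (x.length + (t * L + p) + c) % L = (p + (x.length + c)) % L := by
      rw [show x.length + (t * L + p) + c = p + (x.length + c) + t * L by ring,
        Nat.add_mul_mod_self_right]
    rw [List.getElem?_rotate (by simpa using hp), ← hmod, hletter]
  · rw [List.getElem?_eq_none (by simpa using hp), List.getElem?_eq_none hp]

end Words

/-- If `|u| = |v|` and `uv` is primitive, then `(uv)^ℓ v (uv)^{n-ℓ-1} ↪ (uv)ⁿ`
for `n > |uv| + ℓ + 2`. -/
theorem mid_v_pmaxSub_pow {A : Type*} (u v : List A) (hlen : u.length = v.length)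
    (hprim : Primitive (u ++ v)) :
    ∀ ℓ n : ℕ, n > (u ++ v).length + ℓ + 2 →
      PMaxSub (wpow (u ++ v) ℓ ++ v ++ wpow (u ++ v) (n - ℓ - 1)) (wpow (u ++ v) n) := by
  intro ℓ n hn
  set w := u ++ v
  have hw : w.length = u.length + v.length := List.length_append
  have hv : 0 < v.length := by
    have := List.length_pos_iff.mpr hprim.1
    omega
  have hY : wpow w n = wpow w ℓ ++ (u ++ v) ++ wpow w (n - ℓ - 1) := by
    conv_lhs => rw [show n = ℓ + 1 + (n - ℓ - 1) by omega]
    rw [wpow_add, wpow_add, wpow_one]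
  refine ⟨hY ▸ ((List.sublist_append_right u v).append_left _).append_right _, ?_⟩
  intro f hf i hi
  by_contra hfi
  obtain ⟨c, hc, hrot⟩ := hf.exists_rotate_eq (m := u.length)
    (by simp only [hY, List.length_append]; omega) (by omega) i hi hfi
  refine hprim.rotate_ne (r := v.length + c) (by omega) (by omega) ?_
  rwa [List.length_append, length_wpow, Nat.add_assoc, Nat.mul_comm, ← List.rotate_rotate,
    List.rotate_length_mul] at hrot
end

section
/- For every unbounded regular language L ⊆ Σ*, there exist words x, u, v, y ∈ Σ* such that |u| = |v|, the word uv is primitive, and x{u,v}*y ⊆ L. -/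
/-- `{u,v}*`: the set of all concatenations of copies of `u` and `v`. -/
def star2 {α : Type*} (u v : List α) : Set (List α) :=
  {w | ∃ l : List (List α), (∀ x ∈ l, x = u ∨ x = v) ∧ w = l.flatten}

/-- A language is bounded if it is contained in some `w₁* w₂* ⋯ w_n*`. -/
def BoundedLang {A : Type*} (L : Language A) : Prop :=
  ∃ (n : ℕ) (w : Fin n → List A),
    ∀ x ∈ L, ∃ m : Fin n → ℕ, x = (List.ofFn fun i => wpow (w i) (m i)).flatten




namespace WordAux
variable {α : Type*}

theorem wpow_zero (w : List α) : wpow w 0 = [] := rfl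

theorem wpow_succ (w : List α) (n : ℕ) : wpow w (n+1) = w ++ wpow w n := by
  simp [wpow, List.replicate_succ]

theorem wpow_one (w : List α) : wpow w 1 = w := by simp [wpow_succ, wpow_zero]

theorem wpow_add (w : List α) (a b : ℕ) : wpow w (a+b) = wpow w a ++ wpow w b := by
  induction a with
  | zero => simp [wpow_zero]
  | succ a ih => rw [Nat.succ_add, wpow_succ, ih, wpow_succ, List.append_assoc]

theorem length_wpow (w : List α) (n : ℕ) : (wpow w n).length = n * w.length := by
  induction n with
  | zero => simp [wpow_zero]
  | succ n ih => rw [wpow_succ]; simp [ih]; ring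

theorem wpow_wpow (w : List α) (a b : ℕ) : wpow (wpow w a) b = wpow w (b*a) := by
  induction b with
  | zero => simp [wpow_zero]
  | succ b ih => rw [wpow_succ, ih, Nat.succ_mul, Nat.add_comm, wpow_add]

theorem wpow_comm (w : List α) (n : ℕ) : wpow w n ++ w = w ++ wpow w n := by
  have h1 : wpow w (n+1) = wpow w n ++ w := by rw [wpow_add, wpow_one]
  rw [wpow_succ] at h1
  exact h1.symm

theorem wpow_ne_nil {w : List α} (hw : w ≠ []) {n : ℕ} (hn : 1 ≤ n) : wpow w n ≠ [] := by
  intro h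
  have := congrArg List.length h
  rw [length_wpow] at this
  simp at this
  rcases this with h | h
  · omega
  · exact hw h

theorem wpow_cycle (x y : List α) (m : ℕ) : wpow (x ++ y) m ++ x = x ++ wpow (y ++ x) m := by
  induction m with
  | zero => simp [wpow_zero]
  | succ m ih =>
    rw [wpow_succ, List.append_assoc, List.append_assoc, ih, wpow_succ]
    simp

theorem wpow_inj {x y : List α} {b : ℕ} (hb : 1 ≤ b) (hlen : x.length = y.length)
    (h : wpow x b = wpow y b) : x = y := by
  obtain ⟨b, rfl⟩ : ∃ c, b = c + 1 := ⟨b - 1, by omega⟩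
  rw [wpow_succ, wpow_succ] at h
  exact (List.append_inj h hlen).1

theorem eq_pow_comm_aux {p r : List α} {a b : ℕ} (hp : p ≠ []) (hr : r ≠ []) (ha : 1 ≤ a)
    (hb : 1 ≤ b) (hle : p.length ≤ r.length) (h : wpow p a = wpow r b) : p ++ r = r ++ p := by
  -- p is a prefix of r
  have hpp : p <+: wpow p a := by
    obtain ⟨a, rfl⟩ : ∃ c, a = c + 1 := ⟨a - 1, by omega⟩
    rw [wpow_succ]; exact ⟨wpow p a, rfl⟩
  have hrp : r <+: wpow p a := by
    rw [h]
    obtain ⟨b', rfl⟩ : ∃ c, b = c + 1 := ⟨b - 1, by omega⟩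
    rw [wpow_succ]; exact ⟨wpow r b', rfl⟩
  have hpr : p <+: r := List.prefix_of_prefix_length_le hpp hrp hle
  obtain ⟨c, rfl⟩ := hpr
  -- wpow p a = wpow (p ++ c) b ; show (c++p)^b = (p++c)^b
  have h1 : p ++ wpow p a = wpow p a ++ p := (wpow_comm p a).symm
  have h2 : wpow (p ++ c) b ++ p = p ++ wpow (c ++ p) b := wpow_cycle p c b
  rw [← h] at h2
  have h3 : wpow p a = wpow (c ++ p) b := by
    have := h1.trans h2
    exact (List.append_cancel_left this)
  have h4 : p ++ c = c ++ p := by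
    apply wpow_inj hb (by simp [Nat.add_comm]) (h.symm.trans h3)
  rw [List.append_assoc, ← h4]

end WordAux

namespace WordAux
variable {α : Type*}

theorem eq_pow_comm {p r : List α} {a b : ℕ} (hp : p ≠ []) (hr : r ≠ []) (ha : 1 ≤ a)
    (hb : 1 ≤ b) (h : wpow p a = wpow r b) : p ++ r = r ++ p := by
  rcases le_total p.length r.length with hle | hle
  · exact eq_pow_comm_aux hp hr ha hb hle h
  · exact (eq_pow_comm_aux hr hp hb ha hle h.symm).symm

theorem comm_common_root : ∀ (n : ℕ) (u v : List α), u.length + v.length ≤ n →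
    u ++ v = v ++ u → ∃ (t : List α) (i j : ℕ), u = wpow t i ∧ v = wpow t j := by
  intro n
  induction n with
  | zero =>
    intro u v hlen _
    have hu : u = [] := by
      have := List.length_eq_zero_iff.mp (by omega : u.length = 0); exact this
    have hv : v = [] := by
      have := List.length_eq_zero_iff.mp (by omega : v.length = 0); exact this
    exact ⟨[], 0, 0, by simp [hu, wpow_zero], by simp [hv, wpow_zero]⟩
  | succ n ih =>
    intro u v hlen hcomm
    rcases eq_or_ne u [] with rfl | hu
    · exact ⟨v, 0, 1, by simp [wpow_zero], by simp [wpow_one]⟩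
    rcases eq_or_ne v [] with rfl | hv
    · exact ⟨u, 1, 0, by simp [wpow_one], by simp [wpow_zero]⟩
    rcases le_total u.length v.length with hle | hle
    · -- u prefix of v
      have huv : u <+: v :=
        List.prefix_of_prefix_length_le ⟨v, rfl⟩ (by rw [hcomm]; exact ⟨u, rfl⟩) hle
      obtain ⟨w, rfl⟩ := huv
      have hcomm' : u ++ w = w ++ u := by
        have h2 : u ++ (u ++ w) = u ++ (w ++ u) := by
          rw [hcomm]; simp
        exact List.append_cancel_left h2
      have hlen' : u.length + w.length ≤ n := by
        have h3 : 1 ≤ u.length := List.length_pos_iff.mpr hu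
        simp at hlen; omega
      obtain ⟨t, i, j, hui, hwj⟩ := ih u w hlen' hcomm'
      exact ⟨t, i, i + j, hui, by rw [wpow_add, hui, hwj]⟩
    · -- v prefix of u
      have hvu : v <+: u :=
        List.prefix_of_prefix_length_le ⟨u, rfl⟩ (by rw [← hcomm]; exact ⟨v, rfl⟩) hle
      obtain ⟨w, rfl⟩ := hvu
      have hcomm' : v ++ w = w ++ v := by
        have h2 : v ++ (v ++ w) = v ++ (w ++ v) := by
          rw [← hcomm]; simp
        exact List.append_cancel_left h2
      have hlen' : v.length + w.length ≤ n := by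
        have h3 : 1 ≤ v.length := List.length_pos_iff.mpr hv
        simp at hlen; omega
      obtain ⟨t, i, j, hvi, hwj⟩ := ih v w hlen' hcomm'
      exact ⟨t, i + j, i, by rw [wpow_add, hvi, hwj], hvi⟩

end WordAux

namespace WordAux
variable {α : Type*}

theorem comm_root {u v : List α} (hcomm : u ++ v = v ++ u) :
    ∃ (t : List α) (i j : ℕ), u = wpow t i ∧ v = wpow t j :=
  comm_common_root (u.length + v.length) u v le_rfl hcomm

theorem exists_prim_root : ∀ (n : ℕ) (w : List α), w.length ≤ n → w ≠ [] →
    ∃ (ρ : List α) (k : ℕ), Primitive ρ ∧ 1 ≤ k ∧ w = wpow ρ k := by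
  intro n
  induction n with
  | zero => intro w h hw; exact absurd (List.length_eq_zero_iff.mp (by omega)) hw
  | succ n ih =>
    intro w hlen hw
    by_cases hprim : Primitive w
    · exact ⟨w, 1, hprim, le_rfl, (wpow_one w).symm⟩
    · simp only [Primitive, not_and, not_forall] at hprim
      obtain ⟨r, k, hk, hwr⟩ := hprim hw
      simp only [not_not] at hwr
      have hr : r ≠ [] := by
        rintro rfl
        apply hw
        rw [hwr]
        have : (wpow ([]:List α) k).length = 0 := by rw [length_wpow]; simp
        exact List.length_eq_zero_iff.mp this
      have hrlen : r.length < w.length := by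
        have h1 := congrArg List.length hwr
        rw [length_wpow] at h1
        have h2 : 1 ≤ r.length := List.length_pos_iff.mpr hr
        nlinarith
      obtain ⟨ρ, j, hρ, hj, hrρ⟩ := ih r (by omega) hr
      exact ⟨ρ, k * j, hρ, Nat.mul_pos (by omega) (by omega), by rw [hwr, hrρ, wpow_wpow]⟩


/-- centralizer: anything commuting with a nonempty power of a primitive word
is itself a power of that word. -/
theorem centralizer {ρ x w : List α} (hρ : Primitive ρ) {k : ℕ} (hk : 1 ≤ k)
    (hw : w = wpow ρ k) (hcomm : x ++ w = w ++ x) : ∃ i, x = wpow ρ i := by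
  have hwne : w ≠ [] := by rw [hw]; exact wpow_ne_nil hρ.1 hk
  obtain ⟨t, i, j, hxt, hwt⟩ := comm_root hcomm
  have htne : t ≠ [] := by rintro rfl; apply hwne; rw [hwt, wpow, List.flatten_eq_nil_iff]; simp
  have hj : 1 ≤ j := by
    rcases Nat.eq_zero_or_pos j with rfl | h
    · rw [wpow_zero] at hwt; exact absurd hwt hwne
    · exact h
  -- t^j = ρ^k
  have htρ : t ++ ρ = ρ ++ t := eq_pow_comm htne hρ.1 hj hk (hwt.symm.trans hw)
  obtain ⟨s, a, c, hts, hρs⟩ := comm_root htρ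
  have hsne : s ≠ [] := by rintro rfl; apply hρ.1; rw [hρs, wpow, List.flatten_eq_nil_iff]; simp
  have hc1 : c = 1 := by
    rcases Nat.lt_or_ge c 2 with h2 | h2
    · interval_cases c
      · exact absurd hρs.symm (by simpa [wpow_zero] using hρ.1)
      · rfl
    · exact absurd hρs (hρ.2 s c h2)
  rw [hc1, wpow_one] at hρs
  subst hρs
  exact ⟨i * a, by rw [hxt, hts, wpow_wpow]⟩

end WordAux

namespace WordAux
variable {α : Type*}

def Period (d : ℕ) (w : List α) : Prop := ∀ i : ℕ, i + d < w.length → w[i]? = w[i+d]?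

theorem getElem?_wpow {s : List α} (hs : s ≠ []) (k i : ℕ) (hi : i < k * s.length) :
    (wpow s k)[i]? = s[i % s.length]? := by
  induction k generalizing i with
  | zero => omega
  | succ k ih =>
    rw [wpow_succ]
    rw [Nat.succ_mul] at hi
    rcases Nat.lt_or_ge i s.length with h | h
    · rw [List.getElem?_append_left h, Nat.mod_eq_of_lt h]
    · rw [List.getElem?_append_right h, ih (i - s.length) (by omega)]
      congr 1
      conv_rhs => rw [← Nat.sub_add_cancel h]
      rw [Nat.add_mod_right]

theorem period_of_prefix_wpow {w s : List α} (hs : s ≠ []) {k : ℕ}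
    (hpre : w <+: wpow s k) : Period s.length w := by
  intro i hi
  obtain ⟨c, hc⟩ := hpre
  have hlen : w.length ≤ (wpow s k).length := by rw [← hc]; simp
  rw [length_wpow] at hlen
  have e1 : w[i]? = (wpow s k)[i]? := by rw [← hc, List.getElem?_append_left (by omega)]
  have e2 : w[i+s.length]? = (wpow s k)[i+s.length]? := by
    rw [← hc, List.getElem?_append_left (by omega)]
  rw [e1, e2, getElem?_wpow hs k i (by omega), getElem?_wpow hs k _ (by omega),
    Nat.add_mod_right]

theorem period_sub {d e : ℕ} {w : List α} (hd : Period d w) (he : Period e w)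
    (hde : d ≤ e) (hsum : d + e ≤ w.length) : Period (e - d) w := by
  intro i hi
  rcases Nat.lt_or_ge (i + e) w.length with h | h
  · have h1 := he i (by omega)
    have h2 := hd (i + e - d) (by omega)
    have e3 : i + e - d + d = i + e := by omega
    rw [e3] at h2
    have e4 : i + (e - d) = i + e - d := by omega
    rw [e4, h1, h2]
  · have hid : d ≤ i := by omega
    have h1 := hd (i - d) (by omega)
    have h2 := he (i - d) (by omega)
    rw [Nat.sub_add_cancel hid] at h1
    rw [← h1, h2]
    congr 1
    omega

theorem fine_wilf : ∀ (n d e : ℕ) (w : List α), d + e ≤ n → Period d w → Period e w →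
    d + e ≤ w.length → Period (Nat.gcd d e) w := by
  intro n
  induction n using Nat.strong_induction_on with
  | _ n ih =>
    intro d e w hn hd he hsum
    rcases Nat.eq_zero_or_pos d with rfl | hdpos
    · simpa [Nat.gcd_zero_left] using he
    rcases Nat.eq_zero_or_pos e with rfl | hepos
    · simpa [Nat.gcd_zero_right] using hd
    rcases lt_trichotomy d e with hlt | heq | hgt
    · have h1 : Period (e - d) w := period_sub hd he (by omega) hsum
      have h2 := ih (d + (e - d)) (by omega) d (e - d) w le_rfl hd h1 (by omega)
      rwa [Nat.gcd_sub_self_right (by omega)] at h2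
    · subst heq; simpa [Nat.gcd_self] using hd
    · have h1 : Period (d - e) w := period_sub he hd (by omega) (by omega)
      have h2 := ih (e + (d - e)) (by omega) (d - e) e w (by omega) h1 he (by omega)
      rwa [Nat.gcd_sub_self_left (by omega)] at h2

theorem getElem?_mod_of_period {g : ℕ} {w : List α} (hg : 1 ≤ g) (hp : Period g w) :
    ∀ i : ℕ, i < w.length → w[i]? = w[i % g]? := by
  intro i
  induction i using Nat.strong_induction_on with
  | _ i ih =>
    intro hi
    rcases Nat.lt_or_ge i g with h | h
    · rw [Nat.mod_eq_of_lt h]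
    · have h1 := hp (i - g) (by omega)
      rw [Nat.sub_add_cancel h] at h1
      rw [← h1, ih (i - g) (by omega) (by omega)]
      congr 1
      conv_rhs => rw [← Nat.sub_add_cancel h, Nat.add_mod_right]

theorem take_eq_wpow {g m : ℕ} {w : List α} (hg : 1 ≤ g) (hp : Period g w)
    (hm : m ≤ w.length) (hdvd : g ∣ m) : w.take m = wpow (w.take g) (m / g) := by
  rcases Nat.eq_zero_or_pos m with rfl | hmpos
  · simp [wpow_zero]
  have hgm : g ≤ m := Nat.le_of_dvd hmpos hdvd
  have hgw : g ≤ w.length := hgm.trans hm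
  have htg : (w.take g).length = g := by simp [hgw]
  have htgne : w.take g ≠ [] := by
    intro h0; have := congrArg List.length h0; rw [htg] at this; simp at this; omega
  have hmg : m / g * g = m := Nat.div_mul_cancel hdvd
  apply List.ext_getElem?
  intro i
  rcases Nat.lt_or_ge i m with h | h
  · rw [List.getElem?_take_of_lt h, getElem?_wpow htgne _ i (by rw [htg]; omega),
      getElem?_mod_of_period hg hp i (by omega), htg,
      List.getElem?_take_of_lt (Nat.mod_lt i hg)]
  · rw [List.getElem?_eq_none, List.getElem?_eq_none]
    · rw [length_wpow, htg]; omega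
    · rw [List.length_take]; omega

end WordAux

namespace WordAux
variable {α : Type*}

theorem prefix_wpow {w : List α} {n : ℕ} (hn : 1 ≤ n) : w <+: wpow w n := by
  obtain ⟨n', rfl⟩ : ∃ c, n = c + 1 := ⟨n - 1, by omega⟩
  rw [wpow_succ]; exact ⟨wpow w n', rfl⟩

theorem prim_key {p r : List α} (hp : p ≠ []) (hr : r ≠ []) (hne : p ++ r ≠ r ++ p) :
    Primitive (wpow p (6 * r.length) ++ wpow r (6 * p.length)) := by
  have hpl : 1 ≤ p.length := List.length_pos_iff.mpr hp
  have hrl : 1 ≤ r.length := List.length_pos_iff.mpr hr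
  set u := wpow p (6 * r.length) with hu_def
  set v := wpow r (6 * p.length) with hv_def
  have hPRp : p.length ≤ p.length * r.length := Nat.le_mul_of_pos_right _ (by omega)
  have hul : u.length = 6 * (p.length * r.length) := by rw [hu_def, length_wpow]; ring
  have hvl : v.length = 6 * (p.length * r.length) := by rw [hv_def, length_wpow]; ring
  constructor
  · intro h0
    have := congrArg List.length h0
    simp only [List.length_append, List.length_nil] at this
    omega
  intro s k hk heq
  -- derive contradiction
  apply hne
  have hsne : s ≠ [] := by
    rintro rfl
    have := congrArg List.length heq
    rw [length_wpow] at this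
    simp only [List.length_append, List.length_nil, Nat.mul_zero] at this
    omega
  have hsl : 1 ≤ s.length := List.length_pos_iff.mpr hsne
  have hlen : k * s.length = u.length + v.length := by
    have := congrArg List.length heq
    rw [length_wpow, List.length_append] at this
    omega
  suffices hvu : v = u by
    have := eq_pow_comm hr hp (by omega : 1 ≤ 6 * p.length) (by omega : 1 ≤ 6 * r.length)
      (hvu.trans hu_def)
    exact this.symm
  by_cases hk2 : k = 2
  · subst hk2
    have h2 : wpow s 2 = s ++ s := by rw [(by norm_num : (2:ℕ) = 1 + 1), wpow_add, wpow_one]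
    rw [h2] at heq
    have hlu : u.length = s.length := by omega
    obtain ⟨h3, h4⟩ := List.append_inj heq hlu
    rw [h4, ← h3]
  · have hk3 : 3 ≤ k := by omega
    have hs3 : 3 * s.length ≤ k * s.length := Nat.mul_le_mul_right _ hk3
    have h1 : p.length + s.length ≤ u.length := by omega
    have hPu : Period s.length u := period_of_prefix_wpow hsne ⟨v, heq⟩
    have hPp : Period p.length u := period_of_prefix_wpow hp List.prefix_rfl
    set g := Nat.gcd p.length s.length with hg_def
    have hgpos : 0 < g := Nat.gcd_pos_of_pos_left _ (by omega)
    have hFW : Period g u := fine_wilf (p.length + s.length) p.length s.length u le_rfl hPp hPu h1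
    have hgp : g ∣ p.length := Nat.gcd_dvd_left _ _
    have hgs : g ∣ s.length := Nat.gcd_dvd_right _ _
    have hgu : g ∣ u.length := by rw [hul]; exact Dvd.dvd.mul_left (hgp.mul_right r.length) 6
    set t := u.take g with ht_def
    -- p = t ^ (|p|/g)
    have hp_take : p = u.take p.length :=
      List.prefix_iff_eq_take.mp (prefix_wpow (by omega))
    have hp_eq : p = wpow t (p.length / g) := by
      conv_lhs => rw [hp_take]
      exact take_eq_wpow hgpos hFW (by omega) hgp
    -- s = t ^ (|s|/g)
    have hs_pre : s <+: u :=
      List.prefix_of_prefix_length_le (prefix_wpow (by omega)) ⟨v, heq⟩ (by omega)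
    have hs_eq : s = wpow t (s.length / g) := by
      conv_lhs => rw [List.prefix_iff_eq_take.mp hs_pre]
      exact take_eq_wpow hgpos hFW (by omega) hgs
    -- u = t ^ (|u|/g)
    have hu_eq : u = wpow t (u.length / g) := by
      conv_lhs => rw [← List.take_length (l := u)]
      exact take_eq_wpow hgpos hFW le_rfl hgu
    have e5 : wpow s k = wpow t (k * (s.length / g)) := by conv_lhs => rw [hs_eq, wpow_wpow]
    have e6 : k * (s.length / g) = 2 * (u.length / g) := by
      apply Nat.eq_of_mul_eq_mul_right hgpos
      rw [Nat.mul_assoc, Nat.mul_assoc, Nat.div_mul_cancel hgs, Nat.div_mul_cancel hgu]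
      omega
    have e7 : u ++ v = u ++ u := by
      rw [heq, e5, e6, two_mul, wpow_add, ← hu_eq]
    exact List.append_cancel_left e7

end WordAux



namespace WordAux
variable {A : Type*}

theorem wpow_zero' (w : List A) : wpow w 0 = [] := rfl
theorem wpow_one' (w : List A) : wpow w 1 = w := by simp [wpow]

theorem bounded_mono {L L' : Language A} (h : ∀ x, x ∈ L → x ∈ L') (hb : BoundedLang L') :
    BoundedLang L := by
  obtain ⟨n, w, hw⟩ := hb
  exact ⟨n, w, fun x hx => hw x (h x hx)⟩

theorem bounded_of_forall_not {L : Language A} (h : ∀ x, x ∉ L) : BoundedLang L :=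
  ⟨0, Fin.elim0, fun x hx => absurd hx (h x)⟩

theorem flatten_ofFn_nil (n : ℕ) : (List.ofFn fun _ : Fin n => ([] : List A)).flatten = [] := by
  induction n with
  | zero => simp
  | succ n ih => rw [List.ofFn_succ]; simpa using ih

theorem flatten_ofFn_append {n₁ n₂ : ℕ} (w₁ : Fin n₁ → List A) (w₂ : Fin n₂ → List A)
    (m₁ : Fin n₁ → ℕ) (m₂ : Fin n₂ → ℕ) :
    (List.ofFn fun i : Fin (n₁ + n₂) =>
        wpow (Fin.append w₁ w₂ i) (Fin.append m₁ m₂ i)).flatten =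
      (List.ofFn fun i => wpow (w₁ i) (m₁ i)).flatten ++
        (List.ofFn fun i => wpow (w₂ i) (m₂ i)).flatten := by
  rw [List.ofFn_add, List.flatten_append]
  congr 1
  · simp only [Fin.append_left']
  · simp only [Fin.append_right]

theorem bounded_union {L1 L2 : Language A} (h1 : BoundedLang L1) (h2 : BoundedLang L2) :
    BoundedLang {x | x ∈ L1 ∨ x ∈ L2} := by
  obtain ⟨n₁, w₁, hw₁⟩ := h1
  obtain ⟨n₂, w₂, hw₂⟩ := h2
  refine ⟨n₁ + n₂, Fin.append w₁ w₂, fun x hx => ?_⟩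
  rcases hx with hx | hx
  · obtain ⟨m, hm⟩ := hw₁ x hx
    refine ⟨Fin.append m (fun _ => 0), ?_⟩
    rw [flatten_ofFn_append]
    have : (List.ofFn fun i : Fin n₂ => wpow (w₂ i) 0).flatten = [] := by
      simpa [wpow_zero'] using flatten_ofFn_nil (A := A) n₂
    rw [this, List.append_nil, ← hm]
  · obtain ⟨m, hm⟩ := hw₂ x hx
    refine ⟨Fin.append (fun _ => 0) m, ?_⟩
    rw [flatten_ofFn_append]
    have : (List.ofFn fun i : Fin n₁ => wpow (w₁ i) 0).flatten = [] := by
      simpa [wpow_zero'] using flatten_ofFn_nil (A := A) n₁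
    rw [this, List.nil_append, ← hm]

theorem bounded_concat {L1 L2 : Language A} (h1 : BoundedLang L1) (h2 : BoundedLang L2) :
    BoundedLang {x | ∃ a ∈ L1, ∃ b ∈ L2, x = a ++ b} := by
  obtain ⟨n₁, w₁, hw₁⟩ := h1
  obtain ⟨n₂, w₂, hw₂⟩ := h2
  refine ⟨n₁ + n₂, Fin.append w₁ w₂, fun x hx => ?_⟩
  obtain ⟨a, ha, b, hb, rfl⟩ := hx
  obtain ⟨ma, hma⟩ := hw₁ a ha
  obtain ⟨mb, hmb⟩ := hw₂ b hb
  exact ⟨Fin.append ma mb, by rw [flatten_ofFn_append, ← hma, ← hmb]⟩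

theorem bounded_star (ρ : List A) : BoundedLang {x | ∃ i, x = wpow ρ i} := by
  refine ⟨1, fun _ => ρ, fun x hx => ?_⟩
  obtain ⟨i, rfl⟩ := hx
  exact ⟨fun _ => i, by simp⟩

theorem bounded_word (w : List A) : BoundedLang {x | x = w} := by
  refine ⟨1, fun _ => w, fun x hx => ?_⟩
  obtain rfl : x = w := hx
  exact ⟨fun _ => 1, by simp [wpow_one']⟩

theorem bounded_finUnion {ι : Type*} [Fintype ι] (f : ι → Language A)
    (h : ∀ i, BoundedLang (f i)) : BoundedLang {x | ∃ i, x ∈ f i} := by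
  classical
  have key : ∀ s : Finset ι, BoundedLang {x | ∃ i ∈ s, x ∈ f i} := by
    intro s
    induction s using Finset.induction_on with
    | empty => exact bounded_of_forall_not (fun x hx => by obtain ⟨i, hi, _⟩ := hx; simp at hi)
    | insert a s hns ih =>
      apply bounded_mono (L' := {x | x ∈ f a ∨ x ∈ {x | ∃ i ∈ s, x ∈ f i}})
      · intro x hx
        obtain ⟨i, hi, hxi⟩ := hx
        rcases Finset.mem_insert.mp hi with rfl | hi
        · exact Or.inl hxi
        · exact Or.inr ⟨i, hi, hxi⟩
      · exact bounded_union (h a) ih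
  apply bounded_mono (L' := {x | ∃ i ∈ Finset.univ, x ∈ f i})
  · intro x hx; obtain ⟨i, hi⟩ := hx; exact ⟨i, Finset.mem_univ i, hi⟩
  · exact key Finset.univ

end WordAux

def LangIn {A σ : Type*} (M : DFA A σ) (S : Finset σ) (q : σ) : Language A :=
  {w | (∀ t, t ≤ w.length → M.evalFrom q (w.take t) ∈ S) ∧ M.evalFrom q w ∈ M.accept}

namespace WordAux
variable {A σ : Type*}

theorem langIn_bounded [Fintype A] (M : DFA A σ) (rho : σ → List A)
    (hrho : ∀ q : σ, ∀ x : List A, M.evalFrom q x = q → (∃ x₀, M.evalFrom M.start x₀ = q) →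
      (∃ y, M.evalFrom q y ∈ M.accept) → ∃ i, x = wpow (rho q) i) :
    ∀ S : Finset σ, ∀ q : σ, (∃ x₀, M.evalFrom M.start x₀ = q) →
      BoundedLang (LangIn M S q) := by
  classical
  intro S
  induction S using Finset.strongInduction with
  | _ S IH =>
    intro q hreach
    by_cases hqS : q ∈ S
    · -- cover : ρ* ∪ ⋃ a, ρ* [a] L(S\q, δ q a)
      set cover : Language A := {x | x ∈ {x : List A | ∃ i, x = wpow (rho q) i} ∨
        x ∈ {x : List A | ∃ a : A,
          x ∈ {x : List A | ∃ b1 ∈ {x : List A | ∃ i, x = wpow (rho q) i},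
            ∃ b2 ∈ {x : List A | ∃ c1 ∈ {x : List A | x = [a]},
              ∃ c2 ∈ LangIn M (S.erase q) (M.step q a), x = c1 ++ c2},
            x = b1 ++ b2}}} with hcover
      have hcov_bounded : BoundedLang cover := by
        apply bounded_union (bounded_star _)
        apply bounded_finUnion
        intro a
        apply bounded_concat (bounded_star _)
        apply bounded_concat (bounded_word _)
        apply IH _ (Finset.erase_ssubset hqS)
        obtain ⟨x₀, hx₀⟩ := hreach
        exact ⟨x₀ ++ [a], by rw [M.evalFrom_of_append, hx₀, M.evalFrom_singleton]⟩
      apply bounded_mono _ hcov_bounded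
      rintro w ⟨hrun, hacc⟩
      set P : ℕ → Prop := fun t => M.evalFrom q (w.take t) = q with hP
      have hP0 : P 0 := by simp [hP]
      set T := Nat.findGreatest P w.length with hT
      have hPT : P T := Nat.findGreatest_spec (Nat.zero_le _) hP0
      have hTle : T ≤ w.length := Nat.findGreatest_le _
      have hw12' : w.take T ++ w.drop T = w := List.take_append_drop T w
      obtain ⟨w1, hw1d⟩ : ∃ w1, w1 = w.take T := ⟨_, rfl⟩
      have hw12 : w1 ++ w.drop T = w := by rw [hw1d]; exact hw12'
      have hloop : M.evalFrom q w1 = q := by rw [hw1d]; exact hPT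
      have hlenT : w1.length = T := by rw [hw1d]; simp [hTle]
      have hw2acc : M.evalFrom q (w.drop T) ∈ M.accept := by
        have h0 : M.evalFrom q (w1 ++ w.drop T) ∈ M.accept := by rw [hw12]; exact hacc
        rwa [M.evalFrom_of_append, hloop] at h0
      obtain ⟨i, hi⟩ := hrho q w1 hloop hreach ⟨w.drop T, hw2acc⟩
      cases hdrop : w.drop T with
      | nil =>
        left
        exact ⟨i, by rw [← hi]; rw [hdrop] at hw12; simpa using hw12.symm⟩
      | cons a w2 =>
        right
        refine ⟨a, w1, ⟨i, hi⟩, [a] ++ w2, ⟨[a], rfl, w2, ?_, rfl⟩, ?_⟩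
        · -- w2 ∈ LangIn M (S.erase q) (M.step q a)
          have hkey : ∀ t : ℕ, t ≤ w2.length →
              M.evalFrom (M.step q a) (w2.take t) = M.evalFrom q (w.take (T + (1 + t))) := by
            intro t ht
            conv_rhs => rw [← hw12, hdrop]
            rw [← hlenT, List.take_length_add_append]
            have : (a :: w2).take (1 + t) = a :: w2.take t := by
              rw [Nat.add_comm]; simp
            rw [this, M.evalFrom_of_append, hloop]
            rfl
          have hwlen : w.length = T + (1 + w2.length) := by
            have := congrArg List.length hw12
            rw [hdrop] at this
            simp at this
            omega
          constructor
          · intro t ht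
            rw [hkey t ht]
            have h1 : M.evalFrom q (w.take (T + (1 + t))) ∈ S := hrun _ (by omega)
            have h2 : ¬ P (T + (1 + t)) :=
              Nat.findGreatest_is_greatest (by rw [← hT]; omega) (by omega)
            exact Finset.mem_erase.mpr ⟨fun hcon => h2 hcon, h1⟩
          · have hk2 := hkey w2.length le_rfl
            rw [List.take_length] at hk2
            have hkw : w.take (T + (1 + w2.length)) = w := List.take_of_length_le (by omega)
            rw [hkw] at hk2
            rw [hk2]
            exact hacc
        · conv_lhs => rw [← hw12, hdrop]
          rfl
    · apply bounded_of_forall_not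
      rintro w ⟨hrun, -⟩
      exact hqS (by simpa using hrun 0 (Nat.zero_le _))

end WordAux


namespace WordAux
variable {A σ : Type*}

theorem loop_wpow {M : DFA A σ} {q : σ} {p : List A} (h : M.evalFrom q p = q) (k : ℕ) :
    M.evalFrom q (wpow p k) = q := by
  induction k with
  | zero => rfl
  | succ k ih => rw [wpow_succ, M.evalFrom_of_append, h, ih]

theorem loop_flatten {M : DFA A σ} {q : σ} (l : List (List A))
    (h : ∀ c ∈ l, M.evalFrom q c = q) : M.evalFrom q l.flatten = q := by
  induction l with
  | nil => rfl
  | cons c l ih =>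
    rw [List.flatten_cons, M.evalFrom_of_append, h c List.mem_cons_self,
      ih (fun z hz => h z (List.mem_cons_of_mem _ hz))]

theorem dfa_bounded [Fintype A] [Fintype σ] (M : DFA A σ)
    (Hcomm : ∀ x p r y : List A,
      M.evalFrom (M.evalFrom M.start x) p = M.evalFrom M.start x →
      M.evalFrom (M.evalFrom M.start x) r = M.evalFrom M.start x →
      M.evalFrom (M.evalFrom M.start x) y ∈ M.accept → p ++ r = r ++ p) :
    BoundedLang M.accepts := by
  classical
  have hrho0 : ∀ q : σ, ∃ ρ : List A, ∀ x : List A, M.evalFrom q x = q →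
      (∃ x₀, M.evalFrom M.start x₀ = q) → (∃ y, M.evalFrom q y ∈ M.accept) →
      ∃ i, x = wpow ρ i := by
    intro q
    by_cases hex : ∃ m : List A, m ≠ [] ∧ M.evalFrom q m = q
    · obtain ⟨m, hmne, hml⟩ := hex
      obtain ⟨ρ, kk, hρp, hkk, hmρ⟩ := exists_prim_root m.length m le_rfl hmne
      refine ⟨ρ, fun x hl hre hco => ?_⟩
      obtain ⟨x₀, hx₀⟩ := hre
      obtain ⟨y, hy⟩ := hco
      have hc : x ++ m = m ++ x := Hcomm x₀ x m y (by rw [hx₀]; exact hl)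
        (by rw [hx₀]; exact hml) (by rw [hx₀]; exact hy)
      exact centralizer hρp hkk hmρ hc
    · refine ⟨[], fun x hl _ _ => ?_⟩
      have hx : x = [] := by
        by_contra hne
        exact hex ⟨x, hne, hl⟩
      exact ⟨0, by rw [hx]; rfl⟩
  choose rho hrho using hrho0
  have hsub : ∀ x, x ∈ M.accepts → x ∈ LangIn M Finset.univ M.start :=
    fun x hx => ⟨fun t _ => Finset.mem_univ _, hx⟩
  exact bounded_mono hsub (langIn_bounded M rho hrho Finset.univ M.start ⟨[], rfl⟩)

end WordAux

/-- Every unbounded regular language contains some `x{u,v}*y` with `|u| = |v|`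
and `uv` primitive. -/
theorem unbounded_regular_contains_star2 {A : Type} [Fintype A] (L : Language A)
    (hreg : L.IsRegular) (hub : ¬ BoundedLang L) :
    ∃ x u v y : List A, u.length = v.length ∧ Primitive (u ++ v) ∧
      ∀ w ∈ star2 u v, x ++ w ++ y ∈ L := by
  classical
  obtain ⟨σ, instσ, M, hM⟩ := hreg
  letI := instσ
  by_cases Hc : ∀ x p r y : List A,
      M.evalFrom (M.evalFrom M.start x) p = M.evalFrom M.start x →
      M.evalFrom (M.evalFrom M.start x) r = M.evalFrom M.start x →
      M.evalFrom (M.evalFrom M.start x) y ∈ M.accept → p ++ r = r ++ p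
  · exact absurd (by rw [← hM]; exact WordAux.dfa_bounded M Hc) hub
  · push_neg at Hc
    obtain ⟨x, p, r, y, h1, h2, h3, hne⟩ := Hc
    have hp : p ≠ [] := by rintro rfl; simp at hne
    have hr : r ≠ [] := by rintro rfl; simp at hne
    refine ⟨x, wpow p (6 * r.length), wpow r (6 * p.length), y, ?_,
      WordAux.prim_key hp hr hne, ?_⟩
    · rw [WordAux.length_wpow, WordAux.length_wpow]; ring
    · rintro w ⟨l, hl, rfl⟩
      rw [← hM]
      have hloopl : M.evalFrom (M.evalFrom M.start x) l.flatten = M.evalFrom M.start x := by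
        apply WordAux.loop_flatten
        intro c hc
        rcases hl c hc with rfl | rfl
        · exact WordAux.loop_wpow h1 _
        · exact WordAux.loop_wpow h2 _
      have hfin : M.evalFrom M.start (x ++ l.flatten ++ y) ∈ M.accept := by
        rw [M.evalFrom_of_append, M.evalFrom_of_append, hloopl]
        exact h3
      exact hfin
end

section
/- For any alphabet Σ with at least two letters, the cover relation of the subword order, {(u,w) : u ⊑ w and |w| = |u|+1}, is an unambiguous rational relation. -/
namespace CoverAux

variable {A : Type}

lemma getLast?_cons' (b : A) (x : List A) :
    (b :: x).getLast? = x.getLast?.or (some b) := by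
  cases x with
  | nil => simp
  | cons c t =>
    rw [List.getLast?_cons_cons,
      List.getLast?_eq_getLast_of_ne_nil (List.cons_ne_nil c t)]
    simp [Option.or]

/-- existence of some decomposition -/
lemma exists_dec {u w : List A} (h : u.Sublist w) (hl : w.length = u.length + 1) :
    ∃ x a y, w = x ++ a :: y ∧ u = x ++ y := by
  induction h with
  | slnil => simp at hl
  | @cons l₁ l₂ a h ih =>
    have hlen : l₂.length = l₁.length := by
      simpa using hl
    have : l₁ = l₂ := h.eq_of_length hlen.symm
    exact ⟨[], a, l₂, by simp, by simp [this]⟩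
  | @cons_cons l₁ l₂ a h ih =>
    obtain ⟨x, b, y, hw, hu⟩ := ih (by simpa using hl)
    exact ⟨a :: x, b, y, by simp [hw], by simp [hu]⟩

/-- existence of leftmost decomposition: shifting -/
lemma exists_leftmost_aux :
    ∀ (n : ℕ) (x : List A) (a : A) (y : List A), x.length ≤ n →
      ∃ x' a' y', x ++ a :: y = x' ++ a' :: y' ∧ x ++ y = x' ++ y' ∧
        x'.getLast? ≠ some a' := by
  intro n
  induction n with
  | zero =>
    intro x a y hx
    have : x = [] := List.eq_nil_of_length_eq_zero (Nat.le_zero.mp hx)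
    subst this
    exact ⟨[], a, y, rfl, rfl, by simp⟩
  | succ n ih =>
    intro x a y hx
    by_cases hxa : x.getLast? = some a
    · have hxne : x ≠ [] := by rintro rfl; simp at hxa
      have hdx : x.dropLast ++ [a] = x := List.dropLast_append_getLast? _ hxa
      have hlen : x.dropLast.length ≤ n := by
        have : x.dropLast.length = x.length - 1 := List.length_dropLast
        have hpos : 0 < x.length := List.length_pos_iff.mpr hxne
        omega
      obtain ⟨x', a', y', h1, h2, h3⟩ := ih x.dropLast a (a :: y) hlen
      refine ⟨x', a', y', ?_, ?_, h3⟩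
      · rw [← hdx]; simpa using h1
      · rw [← hdx]; simpa using h2
    · exact ⟨x, a, y, rfl, rfl, hxa⟩

lemma exists_leftmost {u w : List A} (h : u.Sublist w) (hl : w.length = u.length + 1) :
    ∃ x a y, w = x ++ a :: y ∧ u = x ++ y ∧ x.getLast? ≠ some a := by
  obtain ⟨x, a, y, hw, hu⟩ := exists_dec h hl
  obtain ⟨x', a', y', h1, h2, h3⟩ := exists_leftmost_aux x.length x a y le_rfl
  exact ⟨x', a', y', by rw [hw, h1], by rw [hu, h2], h3⟩

/-- uniqueness, assuming length ordering -/
lemma uniq_le {x₁ x₂ y₁ y₂ : List A} {a₁ a₂ : A}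
    (hle : x₁.length ≤ x₂.length)
    (hw : x₁ ++ a₁ :: y₁ = x₂ ++ a₂ :: y₂)
    (hu : x₁ ++ y₁ = x₂ ++ y₂)
    (h2 : x₂.getLast? ≠ some a₂) :
    x₁ = x₂ ∧ a₁ = a₂ ∧ y₁ = y₂ := by
  have hpre : x₁ <+: x₂ := by
    have p1 : x₁ <+: x₂ ++ a₂ :: y₂ := hw ▸ List.prefix_append x₁ (a₁ :: y₁)
    exact List.prefix_of_prefix_length_le p1 (List.prefix_append _ _) hle
  obtain ⟨t, ht⟩ := hpre
  subst ht
  cases t with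
  | nil =>
    simp only [List.append_nil] at hw hu
    have := List.append_cancel_left hw
    injection this with h h'
    exact ⟨by simp, h, h'⟩
  | cons c z =>
    exfalso
    rw [List.append_assoc] at hw hu
    have hw' : a₁ :: y₁ = (c :: z) ++ a₂ :: y₂ := List.append_cancel_left hw
    have hu' : y₁ = (c :: z) ++ y₂ := List.append_cancel_left hu
    injection hw' with hc hy
    subst hc
    rw [hu'] at hy
    -- hy : z ++ a₂ :: y₂ = (a₁ :: z) ++ y₂... check direction
    have hzz : z ++ [a₂] = a₁ :: z := by
      have : (z ++ [a₂]) ++ y₂ = (a₁ :: z) ++ y₂ := by simpa using hy.symm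
      exact List.append_cancel_right this
    have : (x₁ ++ a₁ :: z).getLast? = some a₂ := by
      rw [List.getLast?_append_cons, ← hzz]
      exact List.getLast?_concat
    exact h2 this

lemma uniq {x₁ x₂ y₁ y₂ : List A} {a₁ a₂ : A}
    (hw : x₁ ++ a₁ :: y₁ = x₂ ++ a₂ :: y₂)
    (hu : x₁ ++ y₁ = x₂ ++ y₂)
    (h1 : x₁.getLast? ≠ some a₁)
    (h2 : x₂.getLast? ≠ some a₂) :
    x₁ = x₂ ∧ a₁ = a₂ ∧ y₁ = y₂ := by
  rcases le_total x₁.length x₂.length with hle | hle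
  · exact uniq_le hle hw hu h2
  · obtain ⟨e1, e2, e3⟩ := uniq_le hle hw.symm hu.symm h1
    exact ⟨e1.symm, e2.symm, e3.symm⟩

/-! ### The automaton -/

open scoped Classical

/-- states: `Sum.inl last` = tracking, `Sum.inr false` = accept, `Sum.inr true` = dead -/
noncomputable def M : DFA (A ⊕ A) (Option A ⊕ Bool) where
  step s c :=
    match s, c with
    | Sum.inl _, Sum.inl b => Sum.inl (some b)
    | Sum.inl last, Sum.inr a => if last = some a then Sum.inr true else Sum.inr false
    | Sum.inr false, Sum.inl _ => Sum.inr false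
    | Sum.inr false, Sum.inr _ => Sum.inr true
    | Sum.inr true, _ => Sum.inr true
  start := Sum.inl none
  accept := {Sum.inr false}

lemma evalFrom_cons (M' : DFA (A ⊕ A) (Option A ⊕ Bool)) (s : Option A ⊕ Bool)
    (c : A ⊕ A) (t : List (A ⊕ A)) :
    M'.evalFrom s (c :: t) = M'.evalFrom (M'.step s c) t := rfl

lemma M_dead (l : List (A ⊕ A)) : (M (A := A)).evalFrom (Sum.inr true) l = Sum.inr true := by
  induction l with
  | nil => rfl
  | cons c t ih => cases c <;> simpa [DFA.evalFrom, M] using ih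

lemma M_acc (l : List (A ⊕ A)) :
    (M (A := A)).evalFrom (Sum.inr false) l = Sum.inr false ↔
      ∃ y : List A, l = y.map Sum.inl := by
  induction l with
  | nil => simp [DFA.evalFrom]
  | cons c t ih =>
    rw [evalFrom_cons]
    cases c with
    | inl b =>
      rw [show (M (A := A)).step (Sum.inr false) (Sum.inl b) = Sum.inr false from rfl, ih]
      constructor
      · rintro ⟨y, rfl⟩; exact ⟨b :: y, rfl⟩
      · rintro ⟨y, hy⟩
        cases y with
        | nil => simp at hy
        | cons d y' =>
          simp only [List.map_cons, List.cons.injEq] at hy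
          exact ⟨y', hy.2⟩
    | inr a =>
      rw [show (M (A := A)).step (Sum.inr false) (Sum.inr a) = Sum.inr true from rfl, M_dead]
      refine iff_of_false (by simp) ?_
      rintro ⟨y, hy⟩
      cases y with
      | nil => simp at hy
      | cons d y' => simp at hy

lemma M_main (l : List (A ⊕ A)) : ∀ last : Option A,
    (M (A := A)).evalFrom (Sum.inl last) l = Sum.inr false ↔
      ∃ (x : List A) (a : A) (y : List A),
        l = x.map Sum.inl ++ Sum.inr a :: y.map Sum.inl ∧
        x.getLast?.or last ≠ some a := by
  induction l with
  | nil =>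
    intro last
    refine iff_of_false (by simp [DFA.evalFrom]) ?_
    rintro ⟨x, a, y, h, _⟩
    cases x <;> simp at h
  | cons c t ih =>
    intro last
    rw [evalFrom_cons]
    cases c with
    | inl b =>
      rw [show (M (A := A)).step (Sum.inl last) (Sum.inl b) = Sum.inl (some b) from rfl,
        ih (some b)]
      constructor
      · rintro ⟨x, a, y, rfl, hcond⟩
        refine ⟨b :: x, a, y, by simp, ?_⟩
        rwa [getLast?_cons', Option.or_assoc, Option.some_or]
      · rintro ⟨x, a, y, hx, hcond⟩
        cases x with
        | nil => simp at hx
        | cons d x' =>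
          simp only [List.map_cons, List.cons_append, List.cons.injEq, Sum.inl.injEq] at hx
          obtain ⟨rfl, rfl⟩ := hx
          refine ⟨x', a, y, rfl, ?_⟩
          rwa [getLast?_cons', Option.or_assoc, Option.some_or] at hcond
    | inr a0 =>
      rw [show (M (A := A)).step (Sum.inl last) (Sum.inr a0)
        = if last = some a0 then Sum.inr true else Sum.inr false from rfl]
      by_cases hla : last = some a0
      · rw [if_pos hla, M_dead]
        refine iff_of_false (by simp) ?_
        rintro ⟨x, a, y, hx, hcond⟩
        cases x with
        | nil =>
          simp only [List.map_nil, List.nil_append, List.cons.injEq, Sum.inr.injEq] at hx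
          obtain ⟨rfl, _⟩ := hx
          exact hcond (by simpa using hla)
        | cons d x' => simp at hx
      · rw [if_neg hla, M_acc]
        constructor
        · rintro ⟨y, rfl⟩
          exact ⟨[], a0, y, rfl, by simpa using hla⟩
        · rintro ⟨x, a, y, hx, hcond⟩
          cases x with
          | nil =>
            simp only [List.map_nil, List.nil_append, List.cons.injEq] at hx
            exact ⟨y, hx.2⟩
          | cons d x' => simp at hx

/-- characterization of the accepted language -/
lemma mem_M_accepts (l : List (A ⊕ A)) :
    l ∈ (M (A := A)).accepts ↔
      ∃ (x : List A) (a : A) (y : List A),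
        l = x.map Sum.inl ++ Sum.inr a :: y.map Sum.inl ∧
        x.getLast? ≠ some a := by
  rw [DFA.mem_accepts]
  show (M (A := A)).evalFrom (Sum.inl none) l ∈ ({Sum.inr false} : Set _) ↔ _
  rw [Set.mem_singleton_iff, M_main l none]
  simp [Option.or_none]

/-! ### The homomorphism -/

def g (c : A ⊕ A) : FreeMonoid A × FreeMonoid A :=
  match c with
  | Sum.inl b => (FreeMonoid.of b, FreeMonoid.of b)
  | Sum.inr a => (1, FreeMonoid.of a)

def h : FreeMonoid (A ⊕ A) →* FreeMonoid A × FreeMonoid A := FreeMonoid.lift g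

def p : A ⊕ A → Option A := Sum.elim some fun _ => none

def q : A ⊕ A → A := Sum.elim id id

lemma h_fst (l : List (A ⊕ A)) :
    (h (FreeMonoid.ofList l)).1.toList = l.filterMap p := by
  induction l with
  | nil => rfl
  | cons c t ih =>
    rw [FreeMonoid.ofList_cons, map_mul, Prod.fst_mul, FreeMonoid.toList_mul, ih]
    cases c with
    | inl b => simp [h, g, p, FreeMonoid.lift_eval_of]
    | inr a => simp [h, g, p, FreeMonoid.lift_eval_of, List.filterMap_cons]

lemma h_snd (l : List (A ⊕ A)) :
    (h (FreeMonoid.ofList l)).2.toList = l.map q := by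
  induction l with
  | nil => rfl
  | cons c t ih =>
    rw [FreeMonoid.ofList_cons, map_mul, Prod.snd_mul, FreeMonoid.toList_mul, ih]
    cases c with
    | inl b => simp [h, g, q, FreeMonoid.lift_eval_of]
    | inr a => simp [h, g, q, FreeMonoid.lift_eval_of]

lemma filterMap_dec (x : List A) (a : A) (y : List A) :
    (x.map Sum.inl ++ Sum.inr a :: y.map Sum.inl).filterMap (p (A := A)) = x ++ y := by
  simp [p, List.filterMap_append, List.filterMap_cons, List.filterMap_map,
    Function.comp_def]

lemma map_dec (x : List A) (a : A) (y : List A) :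
    (x.map Sum.inl ++ Sum.inr a :: y.map Sum.inl).map (q (A := A)) = x ++ a :: y := by
  simp [q, List.map_append, List.map_map, Function.comp_def]

end CoverAux

/-- `R ⊆ Σ* × Σ*` is unambiguous rational: there are an alphabet `Γ`, a regular language
`S ⊆ Γ*`, and a monoid homomorphism `h : Γ* → Σ* × Σ*` mapping `S` bijectively onto `R`. -/
def IsUnambRat {A : Type} (R : Set (List A × List A)) : Prop :=
  ∃ (Γ : Type) (_ : Fintype Γ) (S : Language Γ)
    (h : FreeMonoid Γ →* FreeMonoid A × FreeMonoid A),
    S.IsRegular ∧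
    Set.BijOn
      (fun wrd : List Γ =>
        (((h (FreeMonoid.ofList wrd)).1).toList, ((h (FreeMonoid.ofList wrd)).2).toList))
      S R

open CoverAux in
/-- The cover relation of the subword order is unambiguous rational. -/
theorem cover_isUnambRat {A : Type} [Fintype A] (hcard : 1 < Fintype.card A) :
    IsUnambRat {p : List A × List A | p.1.Sublist p.2 ∧ p.2.length = p.1.length + 1} := by
  classical
  refine ⟨A ⊕ A, inferInstance, (M (A := A)).accepts, h, ⟨Option A ⊕ Bool, inferInstance, M, rfl⟩, ?_, ?_, ?_⟩
  · -- MapsTo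
    rintro wrd hwrd
    obtain ⟨x, a, y, rfl, hcond⟩ := (mem_M_accepts wrd).mp hwrd
    simp only [Set.mem_setOf_eq, h_fst, h_snd, filterMap_dec, map_dec]
    constructor
    · exact ((y.sublist_cons_self a).append_left x)
    · simp; omega
  · -- InjOn
    rintro w₁ h₁ w₂ h₂ heq
    obtain ⟨x₁, a₁, y₁, rfl, hc₁⟩ := (mem_M_accepts w₁).mp h₁
    obtain ⟨x₂, a₂, y₂, rfl, hc₂⟩ := (mem_M_accepts w₂).mp h₂
    simp only [h_fst, h_snd, filterMap_dec, map_dec, Prod.mk.injEq] at heq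
    obtain ⟨rfl, rfl, rfl⟩ := uniq heq.2 heq.1 hc₁ hc₂
    rfl
  · -- SurjOn
    rintro ⟨u, w⟩ ⟨hsub, hlen⟩
    obtain ⟨x, a, y, rfl, rfl, hcond⟩ := exists_leftmost hsub hlen
    refine ⟨x.map Sum.inl ++ Sum.inr a :: y.map Sum.inl, ?_, ?_⟩
    · exact (mem_M_accepts _).mpr ⟨x, a, y, rfl, hcond⟩
    · simp only [h_fst, h_snd, filterMap_dec, map_dec]
end

section
/- Let Σ be a finite alphabet, R ⊆ Σ* × Σ* an unambiguous rational relation, K ⊆ Σ* a regular language, and k ∈ ℕ. Then the language {u ∈ Σ* : |{v ∈ K : (u,v) ∈ R}| ≥ k} is regular (where the cardinality condition includes the case that the set is infinite). -/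
open Set

theorem ENat.natCast_le_sum_min_mul_iff {δ : Type*} (D : Finset δ) (k : ℕ) (a b : δ → ℕ∞) :
    (k : ℕ∞) ≤ ∑ d ∈ D, min (k : ℕ∞) (a d) * b d ↔ (k : ℕ∞) ≤ ∑ d ∈ D, a d * b d := by
  refine ⟨fun h => h.trans (Finset.sum_le_sum fun d _ => mul_le_mul_left (min_le_right _ _) _),
    fun h => ?_⟩
  by_cases hbig : ∃ d ∈ D, (k : ℕ∞) ≤ a d ∧ b d ≠ 0
  · obtain ⟨d, hd, hka, hb⟩ := hbig
    calc (k : ℕ∞) ≤ min (k : ℕ∞) (a d) * b d := by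
          rw [min_eq_left hka]; exact le_mul_of_one_le_right' (Order.one_le_iff_ne_zero.mpr hb)
      _ ≤ _ := Finset.single_le_sum (f := fun d => min (k : ℕ∞) (a d) * b d)
          (fun _ _ => zero_le) hd
  · push Not at hbig
    refine h.trans_eq (Finset.sum_congr rfl fun d hd => ?_)
    by_cases hb : b d = 0
    · simp [hb]
    · rw [min_eq_right (not_le.mp ((hbig d hd).mt hb)).le]

theorem ENat.finite_Iic_natCast (k : ℕ) : (Iic (k : ℕ∞)).Finite :=
  ((finite_Iic k).image (↑)).subset fun x hx => by
    lift x to ℕ using ne_top_of_le_ne_top (ENat.natCast_ne_top k) hx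
    exact ⟨x, by simpa using hx, rfl⟩

theorem Language.isRegular_setOf_natCast_le_of_append_eq_sum {A δ : Type} (N : List A → ℕ∞)
    (D : Finset δ) (a : List A → δ → ℕ∞) (b : δ → List A → ℕ∞)
    (hN : ∀ w u, N (w ++ u) = ∑ d ∈ D, a w d * b d u) (k : ℕ) :
    Language.IsRegular {u | (k : ℕ∞) ≤ N u} := by
  let truncate (w : List A) (d : D) : ℕ∞ := min (k : ℕ∞) (a w d)
  let quotientOf (c : D → ℕ∞) : Language A := {u | (k : ℕ∞) ≤ ∑ d : D, c d * b d u}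
  have hquot : Language.leftQuotient ({u | (k : ℕ∞) ≤ N u} : Language A) =
      quotientOf ∘ truncate := by
    funext w
    ext u
    change (k : ℕ∞) ≤ N (w ++ u) ↔ (k : ℕ∞) ≤ _
    rw [hN, ← ENat.natCast_le_sum_min_mul_iff, ← Finset.sum_coe_sort D]
  have hfin : (range truncate).Finite :=
    (Finite.pi (t := fun _ : D => Iic (k : ℕ∞)) fun _ => ENat.finite_Iic_natCast k).subset <| by
      rintro _ ⟨w, rfl⟩ d -
      exact mem_Iic.mpr (min_le_left _ _)
  apply Language.IsRegular.of_finite_range_leftQuotient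
  rw [hquot, range_comp]
  exact hfin.image quotientOf

section MinimalCover

variable {Γ A : Type}

def IsMinimalCover (F : Γ → List A) (w : List A) (x : List Γ) : Prop :=
  w <+: x.flatMap F ∧ ∀ y, y <+: x → w <+: y.flatMap F → y = x

variable {F : Γ → List A} {w : List A} {x : List Γ}

theorem exists_isMinimalCover_append_eq (h : w <+: x.flatMap F) :
    ∃ y z, IsMinimalCover F w y ∧ y ++ z = x := by
  classical
  have hex : ∃ n, w <+: (x.take n).flatMap F := ⟨x.length, by simpa using h⟩
  refine ⟨x.take (Nat.find hex), x.drop (Nat.find hex),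
    ⟨Nat.find_spec hex, fun y hy hwy => hy.eq_of_length_le ?_⟩, List.take_append_drop _ _⟩
  have hy_eq : y = x.take y.length := List.prefix_iff_eq_take.mp (hy.trans (List.take_prefix _ _))
  calc (x.take (Nat.find hex)).length ≤ Nat.find hex := List.length_take_le _ _
    _ ≤ y.length := Nat.find_min' hex (hy_eq ▸ hwy)

theorem IsMinimalCover.eq_of_append_eq {x' z z' : List Γ}
    (hx : IsMinimalCover F w x) (hx' : IsMinimalCover F w x') (h : x ++ z = x' ++ z') : x = x' :=
  (List.prefix_or_prefix_of_prefix (List.prefix_append x z) (h ▸ List.prefix_append x' z')).elim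
    (fun hp => hx'.2 x hp hx.1) fun hp => (hx.2 x' hp hx'.1).symm

theorem IsMinimalCover.flatMap_eq_append_drop
    (hx : IsMinimalCover F w x) : x.flatMap F = w ++ (x.flatMap F).drop w.length := by
  obtain ⟨s, hs⟩ := hx.1
  rw [← hs, List.drop_left]

theorem IsMinimalCover.drop_eq_nil_or_isSuffix
    (hx : IsMinimalCover F w x) :
    (x.flatMap F).drop w.length = [] ∨ ∃ g, (x.flatMap F).drop w.length <:+ F g := by
  obtain ⟨s, hs⟩ := hx.1
  rw [← hs, List.drop_left]
  rcases List.eq_nil_or_concat' x with rfl | ⟨y, g, rfl⟩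
  · exact .inl (List.append_eq_nil_iff.mp hs).2
  · right
    refine ⟨g, ?_⟩
    rw [List.flatMap_append, List.flatMap_singleton] at hs
    rcases List.prefix_or_prefix_of_prefix (List.prefix_append (y.flatMap F) (F g))
      (hs ▸ List.prefix_append w s) with ⟨t, rfl⟩ | hw
    · rw [List.append_assoc, List.append_cancel_left_eq] at hs
      exact ⟨t, hs⟩
    · have := hx.2 y (List.prefix_append y [g]) hw
      simp at this

end MinimalCover

theorem encard_setOf_flatMap_eq_append_eq_sum {Γ A : Type} (L : Language Γ) (F : Γ → List A)
    (D : Finset (Language Γ × List A))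
    (hD : ∀ w x, IsMinimalCover F w x → (L.leftQuotient x, (x.flatMap F).drop w.length) ∈ D)
    (w u : List A) :
    {x | x ∈ L ∧ x.flatMap F = w ++ u}.encard = ∑ d ∈ D,
      {x | IsMinimalCover F w x ∧ (L.leftQuotient x, (x.flatMap F).drop w.length) = d}.encard *
        {z | z ∈ d.1 ∧ d.2 ++ z.flatMap F = u}.encard := by
  let P : Set (List Γ × List Γ) := {p | IsMinimalCover F w p.1 ∧ p.2 ∈ L.leftQuotient p.1 ∧
    (p.1.flatMap F).drop w.length ++ p.2.flatMap F = u}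
  have himage : {x | x ∈ L ∧ x.flatMap F = w ++ u} = (fun p => p.1 ++ p.2) '' P := by
    ext x
    constructor
    · rintro ⟨hxL, hxu⟩
      obtain ⟨y, z, hy, rfl⟩ :=
        exists_isMinimalCover_append_eq (F := F) (hxu ▸ List.prefix_append w u)
      refine ⟨(y, z), ⟨hy, hxL, ?_⟩, rfl⟩
      rw [List.flatMap_append, hy.flatMap_eq_append_drop, List.append_assoc] at hxu
      exact List.append_cancel_left hxu
    · rintro ⟨⟨y, z⟩, ⟨hy, hz, hu⟩, rfl⟩
      refine ⟨hz, ?_⟩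
      rw [List.flatMap_append, hy.flatMap_eq_append_drop, List.append_assoc, hu]
  have hinj : InjOn (fun p : List Γ × List Γ => p.1 ++ p.2) P := by
    rintro ⟨y, z⟩ ⟨hy, -⟩ ⟨y', z'⟩ ⟨hy', -⟩ h
    obtain rfl := hy.eq_of_append_eq hy' h
    simpa using h
  have hfibres : P = ⋃ d ∈ (D : Set _),
      {x | IsMinimalCover F w x ∧ (L.leftQuotient x, (x.flatMap F).drop w.length) = d} ×ˢ
        {z | z ∈ d.1 ∧ d.2 ++ z.flatMap F = u} := by
    ext ⟨y, z⟩
    simp only [P, mem_ofPred_eq, mem_iUnion, mem_prod, exists_prop]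
    constructor
    · rintro ⟨hy, hz, hu⟩
      exact ⟨_, hD w y hy, ⟨hy, rfl⟩, hz, hu⟩
    · rintro ⟨d, -, ⟨hy, rfl⟩, hz, hu⟩
      exact ⟨hy, hz, hu⟩
  rw [himage, hinj.encard_image, hfibres, D.finite_toSet.encard_biUnion, finsum_mem_coe_finset]
  · simp only [encard_prod]
  · rintro d - d' - hne
    refine disjoint_left.mpr fun p hp hp' => hne ?_
    exact hp.1.2.symm.trans hp'.1.2

theorem Language.IsRegular.setOf_natCast_le_encard_fiber {Γ A : Type} [Finite Γ]
    {L : Language Γ} (hL : L.IsRegular) (F : Γ → List A) (k : ℕ) :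
    Language.IsRegular {u | (k : ℕ∞) ≤ {x | x ∈ L ∧ x.flatMap F = u}.encard} := by
  have hsuffixes : (insert [] (⋃ g, {s | s <:+ F g})).Finite :=
    (finite_iUnion fun g => by simpa only [List.mem_tails] using (F g).tails.finite_toSet).insert []
  classical
  refine Language.isRegular_setOf_natCast_le_of_append_eq_sum _
    (hL.finite_range_leftQuotient.toFinset ×ˢ hsuffixes.toFinset)
    (fun w d =>
      {x | IsMinimalCover F w x ∧ (L.leftQuotient x, (x.flatMap F).drop w.length) = d}.encard)
    (fun d u => {z | z ∈ d.1 ∧ d.2 ++ z.flatMap F = u}.encard) (fun w u => ?_) k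
  refine encard_setOf_flatMap_eq_append_eq_sum L F _ (fun w x hx => ?_) w u
  simpa using hx.drop_eq_nil_or_isSuffix

theorem FreeMonoid.toList_apply_ofList {Γ A : Type*} (f : FreeMonoid Γ →* FreeMonoid A)
    (w : List Γ) : (f (ofList w)).toList = w.flatMap fun g => (f (of g)).toList := by
  induction w with
  | nil => rw [ofList_nil, map_one]; rfl
  | cons g w ih => rw [ofList_cons, map_mul, toList_mul, ih, List.flatMap_cons]

theorem Language.IsRegular.preimage_flatMap {Γ A : Type} {K : Language A} (hK : K.IsRegular)
    (G : Γ → List A) : Language.IsRegular ({x | x.flatMap G ∈ K} : Language Γ) := by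
  apply Language.IsRegular.of_finite_range_leftQuotient
  refine (hK.finite_range_leftQuotient.image
    fun Q => ({z | z.flatMap G ∈ Q} : Language Γ)).subset ?_
  rintro _ ⟨x, rfl⟩
  refine ⟨_, ⟨x.flatMap G, rfl⟩, ?_⟩
  ext z
  change _ ↔ (x ++ z).flatMap G ∈ K
  rw [List.flatMap_append]
  rfl

theorem Set.BijOn.encard_setOf_mem_and_mk_mem {α β γ : Type*} {f : α → β × γ} {S : Set α}
    {R : Set (β × γ)} (hf : BijOn f S R) (K : Set γ) (u : β) :
    {v | v ∈ K ∧ (u, v) ∈ R}.encard = {x | x ∈ S ∩ {x | (f x).2 ∈ K} ∧ (f x).1 = u}.encard := by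
  have himage : {v | v ∈ K ∧ (u, v) ∈ R} =
      (fun x => (f x).2) '' {x | x ∈ S ∩ {x | (f x).2 ∈ K} ∧ (f x).1 = u} := by
    ext v
    constructor
    · rintro ⟨hvK, hvR⟩
      obtain ⟨x, hxS, hx⟩ := hf.surjOn hvR
      exact ⟨x, ⟨⟨hxS, by simpa [hx] using hvK⟩, by simp [hx]⟩, by simp [hx]⟩
    · rintro ⟨x, ⟨⟨hxS, hxK⟩, rfl⟩, rfl⟩
      exact ⟨hxK, hf.mapsTo hxS⟩
  rw [himage, InjOn.encard_image]
  rintro x ⟨⟨hxS, -⟩, hxu⟩ x' ⟨⟨hx'S, -⟩, hx'u⟩ h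
  exact hf.injOn hxS hx'S (Prod.ext (hxu.trans hx'u.symm) h)

theorem counting_image_regular_general {A : Type} (R : Set (List A × List A))
    (hR : IsUnambRat R) (K : Language A) (hK : K.IsRegular) (k : ℕ) :
    Language.IsRegular
      {u : List A | (k : ℕ∞) ≤ {v : List A | v ∈ K ∧ (u, v) ∈ R}.encard} := by
  obtain ⟨Γ, _, S, h, hS, hbij⟩ := hR
  let F (g : Γ) : List A := (h (FreeMonoid.of g)).1.toList
  let G (g : Γ) : List A := (h (FreeMonoid.of g)).2.toList
  have hbij' : BijOn (fun x => (x.flatMap F, x.flatMap G)) S R := by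
    refine hbij.congr fun x _ => ?_
    exact Prod.ext (FreeMonoid.toList_apply_ofList ((MonoidHom.fst _ _).comp h) x)
      (FreeMonoid.toList_apply_ofList ((MonoidHom.snd _ _).comp h) x)
  have hcount (u : List A) : {v | v ∈ K ∧ (u, v) ∈ R}.encard =
      {x | x ∈ S ⊓ ({x | x.flatMap G ∈ K} : Language Γ) ∧ x.flatMap F = u}.encard :=
    hbij'.encard_setOf_mem_and_mk_mem K u
  simp only [hcount]
  exact (hS.inf (hK.preimage_flatMap G)).setOf_natCast_le_encard_fiber F k

/-- For unambiguous rational `R`, regular `K` and `k ∈ ℕ`, the language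
`{u : |{v ∈ K : (u,v) ∈ R}| ≥ k}` is regular (infinite sets count as `≥ k`). -/
theorem counting_image_regular {A : Type} [Fintype A] (R : Set (List A × List A))
    (hR : IsUnambRat R) (K : Language A) (hK : K.IsRegular) (k : ℕ) :
    Language.IsRegular
      {u : List A | (k : ℕ∞) ≤ {v : List A | v ∈ K ∧ (u, v) ∈ R}.encard} :=
  counting_image_regular_general R hR K hK k
end

section
/- Let L = {ab, ba}* over the alphabet Σ = {a,b}. Then every word u ∈ L satisfies |u|_a = |u|_b, and for every word w ∈ Σ* all but finitely many u ∈ L satisfy w ⊑ u. -/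
lemma count_flatten_eq (l : List (List Bool))
    (hl : ∀ x ∈ l, x = [true, false] ∨ x = [false, true]) :
    l.flatten.count true = l.flatten.count false := by
  induction l with
  | nil => simp
  | cons x l ih =>
    have hx := hl x (by simp)
    have ih' := ih (fun y hy => hl y (by simp [hy]))
    simp only [List.flatten_cons, List.count_append, ih']
    rcases hx with h | h <;> subst h <;> simp [List.count_cons]

lemma sublist_flatten (w : List Bool) (l : List (List Bool))
    (hl : ∀ x ∈ l, x = [true, false] ∨ x = [false, true])
    (hlen : w.length ≤ l.length) : w.Sublist l.flatten := by
  induction w generalizing l with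
  | nil => simp
  | cons c w ih =>
    cases l with
    | nil => simp at hlen
    | cons x l =>
      have hx := hl x (by simp)
      have h1 : [c].Sublist x := by
        rcases hx with h | h <;> subst h <;> cases c <;> decide
      have h2 : w.Sublist l.flatten :=
        ih l (fun y hy => hl y (by simp [hy])) (by simpa using hlen)
      simpa using (h1.append h2 : ([c] ++ w).Sublist (x ++ l.flatten))

lemma flatten_len (l : List (List Bool))
    (hl : ∀ x ∈ l, x = [true, false] ∨ x = [false, true]) :
    l.flatten.length = 2 * l.length := by
  induction l with
  | nil => simp
  | cons x t ih =>
    have hx := hl x (by simp)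
    have := ih (fun y hy => hl y (by simp [hy]))
    rcases hx with h | h <;> subst h <;> simp [this] <;> ring

/-- In `L = {ab, ba}*`, every word has equally many `a`s and `b`s, and for every word `w`
all but finitely many `u ∈ L` satisfy `w ⊑ u`. -/
theorem abba_star_properties :
    (∀ u ∈ star2 [true, false] [false, true], u.count true = u.count false) ∧
    (∀ w : List Bool,
      {u : List Bool | u ∈ star2 [true, false] [false, true] ∧ ¬ w.Sublist u}.Finite) := by
  constructor
  · rintro u ⟨l, hl, rfl⟩
    exact count_flatten_eq l hl
  · intro w
    apply Set.Finite.subset (List.finite_length_lt (α := Bool) (2 * w.length))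
    rintro u ⟨⟨l, hl, rfl⟩, hns⟩
    simp only [Set.mem_setOf_eq]
    have hlen : l.length < w.length := by
      by_contra h
      exact hns (sublist_flatten w l hl (le_of_not_gt h))
    have : l.flatten.length = 2 * l.length := flatten_len l hl
    omega
end
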